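/- arXiv:1109.6556 — 3 statements merged into one kernel-verified Lean document; each statement's English description precedes it below -/
import Mathlib

section
/- Let E be a finite-dimensional real inner product space and let D : E → E be a self-adjoint linear endomorphism. If v ∈ E is such that the set { exp(tD) v : t ∈ ℝ } is bounded in E, then D v = 0. -/
/-!
Along `x t = exp (t • D) v` we have `(‖x‖²)' = 2 ⟪x, D x⟫` and, since `D` is symmetric,
`⟪x, D x⟫' = 2 ‖D x‖² ≥ 0`. So `‖x‖²` is a bounded function of `t ∈ ℝ` with monotone derivative,
which forces that derivative to vanish identically: `⟪x, D x⟫ ≡ 0`. Differentiating once more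
gives `‖D v‖² = 0`.
-/

open RealInnerProductSpace Set

theorem nonpos_of_hasDerivAt_of_monotone_of_bddAbove {f f' : ℝ → ℝ}
    (hf : ∀ t, HasDerivAt f (f' t) t) (hf' : Monotone f') (hbdd : BddAbove (range f)) (t₀ : ℝ) :
    f' t₀ ≤ 0 := by
  by_contra! hpos
  obtain ⟨M, hM⟩ := hbdd
  have hlin : ∀ s, t₀ ≤ s → f' t₀ * (s - t₀) ≤ f s - f t₀ :=
    fun s hs => (convex_Ici t₀).mul_sub_le_image_sub_of_le_deriv
      (fun s _ => (hf s).continuousAt.continuousWithinAt)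
      (fun s _ => (hf s).differentiableAt.differentiableWithinAt)
      (fun s hs => (hf s).deriv ▸ hf' (by rw [interior_Ici] at hs; exact hs.le))
      t₀ self_mem_Ici s hs hs
  set s := t₀ + (M - f t₀ + 1) / f' t₀
  have hs : f' t₀ * (s - t₀) = M - f t₀ + 1 := by simp only [s]; field_simp; ring
  have := hlin s (le_add_of_nonneg_right (div_nonneg (by linarith [hM ⟨t₀, rfl⟩]) hpos.le))
  linarith [hM ⟨s, rfl⟩]

theorem eq_zero_of_hasDerivAt_of_monotone_of_bddAbove {f f' : ℝ → ℝ}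
    (hf : ∀ t, HasDerivAt f (f' t) t) (hf' : Monotone f') (hbdd : BddAbove (range f)) (t : ℝ) :
    f' t = 0 := by
  have hreflect : -f' (- -t) ≤ 0 := by
    refine nonpos_of_hasDerivAt_of_monotone_of_bddAbove (f := fun s => f (-s))
      (fun s => ?_) (fun a b hab => neg_le_neg (hf' (neg_le_neg hab))) ?_ (-t)
    · exact neg_one_smul ℝ (f' (-s)) ▸ (hf (-s)).scomp s (hasDerivAt_neg s)
    · exact hbdd.mono (range_comp_subset_range _ f)
  rw [neg_neg, neg_nonpos] at hreflect
  exact le_antisymm (nonpos_of_hasDerivAt_of_monotone_of_bddAbove hf hf' hbdd t) hreflect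

theorem hasDerivAt_exp_smul_apply {𝕂 E : Type*} [RCLike 𝕂] [NormedAddCommGroup E]
    [NormedSpace 𝕂 E] [CompleteSpace E] (D : E →L[𝕂] E) (v : E) (t : 𝕂) :
    HasDerivAt (fun s : 𝕂 => NormedSpace.exp (s • D) v) (D (NormedSpace.exp (t • D) v)) t := by
  simpa using (hasDerivAt_exp_smul_const' D t).clm_apply (hasDerivAt_const t v)

namespace LinearMap.IsSymmetric

variable {E : Type*} [NormedAddCommGroup E] [InnerProductSpace ℝ E] {D : E →L[ℝ] E}
  (hD : (D : E →ₗ[ℝ] E).IsSymmetric) {x : ℝ → E} (hx : ∀ t, HasDerivAt x (D (x t)) t)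
include hD hx

theorem hasDerivAt_inner_self_map (t : ℝ) :
    HasDerivAt (fun s => ⟪x s, D (x s)⟫) (2 * ‖D (x t)‖ ^ 2) t := by
  have := (hx t).inner ℝ (D.hasFDerivAt.comp_hasDerivAt t (hx t))
  rw [Function.comp_apply, ← hD.apply_clm, real_inner_self_eq_norm_sq, ← two_mul] at this
  exact this

theorem monotone_inner_self_map : Monotone fun s => ⟪x s, D (x s)⟫ :=
  monotone_of_hasDerivAt_nonneg (hD.hasDerivAt_inner_self_map hx) fun t => by positivity

end LinearMap.IsSymmetric

/-- If `D` is a self-adjoint (symmetric) endomorphism of a finite-dimensional real inner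
product space `E` and `v ∈ E` is such that `{ exp(tD) v : t ∈ ℝ }` is bounded, then `D v = 0`. -/
theorem stmt_1 (E : Type*) [NormedAddCommGroup E] [InnerProductSpace ℝ E]
    [FiniteDimensional ℝ E] (D : E →L[ℝ] E)
    (hD : ∀ x y : E, ⟪D x, y⟫ = ⟪x, D y⟫) (v : E)
    (hbdd : Bornology.IsBounded (Set.range fun t : ℝ => NormedSpace.exp (t • D) v)) :
    D v = 0 := by
  set x := fun t : ℝ => NormedSpace.exp (t • D) v
  have hx : ∀ t, HasDerivAt x (D (x t)) t := hasDerivAt_exp_smul_apply D v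
  have hsym : (D : E →ₗ[ℝ] E).IsSymmetric := hD
  obtain ⟨M, hM⟩ := hbdd.exists_norm_le
  have hnorm_bdd : BddAbove (range fun t => ‖x t‖ ^ 2) :=
    ⟨M ^ 2, forall_mem_range.2 fun t => pow_le_pow_left₀ (norm_nonneg _) (hM _ ⟨t, rfl⟩) 2⟩
  have hzero : ∀ t, ⟪x t, D (x t)⟫ = 0 := fun t => by
    simpa using eq_zero_of_hasDerivAt_of_monotone_of_bddAbove (fun t => (hx t).norm_sq)
      ((hsym.monotone_inner_self_map hx).const_mul zero_le_two) hnorm_bdd t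
  have hderiv := hsym.hasDerivAt_inner_self_map hx 0
  rw [funext hzero] at hderiv
  simpa [x] using hderiv.unique (hasDerivAt_const 0 0)
end

section
/- Let E be a finite-dimensional real inner product space, let A : E → E be a skew-adjoint linear endomorphism, and let B : E → E be a linear endomorphism commuting with A whose characteristic polynomial splits over ℝ (i.e., all complex eigenvalues of B are real). Then the kernel of A + B equals the intersection of the kernel of A and the kernel of B: (A + B) v = 0 if and only if A v = 0 and B v = 0. -/
/-!
If `(A + B) v = 0` then `B v = -A v`, and since `B` commutes with `-A` this propagates to
`p(B) v = p(-A) v` for every polynomial `p`. Cayley–Hamilton with `χ_B = ∏ (X - rᵢ)` (all `rᵢ`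
real) gives `∏ (-A - rᵢ) v = 0`. For a skew-symmetric `S` we have `⟪S x, x⟫ = 0`, so `S - r` is
injective for `r ≠ 0`, and `ker S² = ker S`; peeling off the factors one by one yields `A v = 0`.
-/

open Polynomial RealInnerProductSpace

namespace Module.End

variable {R M : Type*} [CommSemiring R] [AddCommMonoid M] [Module R M]

theorem pow_apply_eq_of_commute {f g : Module.End R M} (hfg : Commute f g) {v : M}
    (hv : f v = g v) (n : ℕ) : (f ^ n) v = (g ^ n) v := by
  induction n with
  | zero => rfl
  | succ n ih =>
    calc (f ^ (n + 1)) v = (f ^ n) (g v) := by rw [pow_succ, mul_apply, hv]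
      _ = g ((f ^ n) v) := LinearMap.congr_fun ((hfg.pow_left n).eq) v
      _ = (g ^ (n + 1)) v := by rw [ih, pow_succ', mul_apply]

theorem aeval_apply_eq_of_commute {f g : Module.End R M} (hfg : Commute f g) {v : M}
    (hv : f v = g v) (p : R[X]) : aeval f p v = aeval g p v := by
  induction p using Polynomial.induction_on' with
  | add p q hp hq => simp only [map_add, LinearMap.add_apply, hp, hq]
  | monomial n r =>
    simp only [aeval_monomial, mul_apply, algebraMap_end_apply, pow_apply_eq_of_commute hfg hv]

end Module.End

namespace LinearMap

variable {E : Type*} [NormedAddCommGroup E] [InnerProductSpace ℝ E]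

def IsSkewSymmetric (S : E →ₗ[ℝ] E) : Prop :=
  ∀ x y : E, ⟪S x, y⟫ = -⟪x, S y⟫

namespace IsSkewSymmetric

variable {S : E →ₗ[ℝ] E}

theorem neg (hS : S.IsSkewSymmetric) : (-S).IsSkewSymmetric := fun x y => by
  simp only [neg_apply, inner_neg_left, inner_neg_right, hS x y]

theorem inner_map_self (hS : S.IsSkewSymmetric) (x : E) : ⟪S x, x⟫ = 0 := by
  linarith [hS x x, real_inner_comm x (S x)]

theorem eq_zero_of_map_eq_smul (hS : S.IsSkewSymmetric) {r : ℝ} (hr : r ≠ 0) {x : E}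
    (hx : S x = r • x) : x = 0 := by
  have h := hS.inner_map_self x
  rw [hx, real_inner_smul_left, mul_eq_zero, inner_self_eq_zero] at h
  exact h.resolve_left hr

theorem map_eq_zero_of_map_map_eq_zero (hS : S.IsSkewSymmetric) {x : E} (hx : S (S x) = 0) :
    S x = 0 := by
  have h := hS (S x) x
  rwa [hx, inner_zero_left, zero_eq_neg, real_inner_comm, inner_self_eq_zero] at h

theorem map_eq_zero_of_aeval_prod_X_sub_C (hS : S.IsSkewSymmetric) (s : Multiset ℝ) {x : E}
    (hx : aeval S (s.map (X - C ·)).prod x = 0) : S x = 0 := by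
  induction s using Multiset.induction_on generalizing x with
  | empty => simp_all
  | cons r s ih =>
    set P := aeval S (s.map (X - C ·)).prod
    have hPx : S (P x) = r • P x := by
      simpa [sub_eq_zero, Module.End.mul_apply, Module.algebraMap_end_apply] using hx
    by_cases hr : r = 0
    · have hSP : Commute S P := by
        simpa only [aeval_X] using (Commute.all (X : ℝ[X]) (s.map (X - C ·)).prod).map (aeval S)
      have hPS : P (S x) = S (P x) := LinearMap.congr_fun hSP.eq.symm x
      exact hS.map_eq_zero_of_map_map_eq_zero (ih (by rw [hPS, hPx, hr, zero_smul]))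
    · exact ih (hS.eq_zero_of_map_eq_smul hr hPx)

end IsSkewSymmetric

end LinearMap

/-- If `A` is skew-adjoint, `B` commutes with `A`, and the characteristic polynomial of `B`
splits over `ℝ` (all eigenvalues of `B` are real), then `ker (A + B) = ker A ⊓ ker B`. -/
theorem stmt_4 (E : Type*) [NormedAddCommGroup E] [InnerProductSpace ℝ E]
    [FiniteDimensional ℝ E] (A B : E →ₗ[ℝ] E)
    (hA : ∀ x y : E, ⟪A x, y⟫ = -⟪x, A y⟫)
    (hcomm : A ∘ₗ B = B ∘ₗ A)
    (hsplit : ((LinearMap.charpoly B).map (RingHom.id ℝ)).Splits) :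
    ∀ v : E, (A + B) v = 0 ↔ A v = 0 ∧ B v = 0 := by
  intro v
  refine ⟨fun hv => ?_, fun ⟨hAv, hBv⟩ => by rw [LinearMap.add_apply, hAv, hBv, add_zero]⟩
  have hBv : B v = (-A) v := eq_neg_of_add_eq_zero_right hv
  have hBA : Commute B (-A) := (Commute.symm hcomm).neg_right
  rw [Polynomial.map_id] at hsplit
  have hroots : aeval (-A) ((B.charpoly.roots.map (X - C ·)).prod) v = 0 := by
    rw [← hsplit.eq_prod_roots_of_monic B.charpoly_monic,
      ← Module.End.aeval_apply_eq_of_commute hBA hBv, LinearMap.aeval_self_charpoly,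
      LinearMap.zero_apply]
  have hAv : A v = 0 := by
    simpa using (LinearMap.IsSkewSymmetric.neg hA).map_eq_zero_of_aeval_prod_X_sub_C _ hroots
  exact ⟨hAv, by rw [hBv, LinearMap.neg_apply, hAv, neg_zero]⟩
end

section
/- Let 𝔰 be a Lie algebra over ℝ and let φ : 𝔰 → Der(𝔰) be a linear map into the derivations of 𝔰 such that: (a) φ(⁅X, Y⁆) = 0 for all X, Y ∈ 𝔰 (φ vanishes on the derived algebra); (b) φ(X) ∘ φ(Y) = φ(Y) ∘ φ(X) for all X, Y ∈ 𝔰 (the image of φ is commutative); and (c) φ(φ(X)(Y)) = 0 for all X, Y ∈ 𝔰. Then the bilinear bracket defined by ⁅X, Y⁆_φ := ⁅X, Y⁆ + φ(X)(Y) − φ(Y)(X) is alternating (⁅X, X⁆_φ = 0 for all X) and satisfies the Jacobi identity: ⁅X, ⁅Y, Z⁆_φ⁆_φ + ⁅Y, ⁅Z, X⁆_φ⁆_φ + ⁅Z, ⁅X, Y⁆_φ⁆_φ = 0 for all X, Y, Z ∈ 𝔰. -/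
/-- The modified bracket `⁅X, Y⁆_φ = ⁅X, Y⁆ + φ(X)(Y) − φ(Y)(X)` on a real Lie algebra `𝔰`,
for a linear map `φ : 𝔰 → Der(𝔰)` vanishing on the derived algebra, with commutative image,
and with `φ(φ(X)(Y)) = 0`, is alternating and satisfies the Jacobi identity. -/
theorem stmt_6 (L : Type*) [LieRing L] [LieAlgebra ℝ L]
    (φ : L →ₗ[ℝ] LieDerivation ℝ L L)
    (ha : ∀ X Y : L, φ ⁅X, Y⁆ = 0)
    (hb : ∀ X Y Z : L, φ X (φ Y Z) = φ Y (φ X Z))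
    (hc : ∀ X Y : L, φ (φ X Y) = 0) :
    (∀ X : L, ⁅X, X⁆ + φ X X - φ X X = 0) ∧
      (∀ X Y Z : L,
        (fun a b : L => ⁅a, b⁆ + φ a b - φ b a) X
            ((fun a b : L => ⁅a, b⁆ + φ a b - φ b a) Y Z) +
          (fun a b : L => ⁅a, b⁆ + φ a b - φ b a) Y
            ((fun a b : L => ⁅a, b⁆ + φ a b - φ b a) Z X) +
          (fun a b : L => ⁅a, b⁆ + φ a b - φ b a) Z
            ((fun a b : L => ⁅a, b⁆ + φ a b - φ b a) X Y) = 0) := by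
  constructor
  · intro X; simp
  · intro X Y Z
    simp only [map_add, map_sub, ha, hc, LieDerivation.coe_add, LieDerivation.coe_sub,
      LieDerivation.coe_zero, Pi.add_apply, Pi.sub_apply, Pi.zero_apply,
      lie_add, add_lie, lie_sub, sub_lie, map_add, map_sub,
      LieDerivation.apply_lie_eq_add]
    have jac := lie_jacobi X Y Z
    have h1 := hb X Y Z
    have h2 := hb Y Z X
    have h3 := hb Z X Y
    rw [h1, h2, h3, ← lie_skew ((φ Y) Z) X, ← lie_skew ((φ Z) X) Y, ← lie_skew ((φ X) Y) Z]
    abel_nf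
    abel_nf at jac
    linear_combination (norm := abel) jac
end
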